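/- arXiv:2510.19978 — 2 statements merged into one kernel-verified Lean document; each statement's English description precedes it below -/
import Mathlib

section
/- If the complete graph K_n admits a decomposition of its edge set into triangles (i.e., an (n,3,2)-Steiner triple system exists), then n ≡ 1 (mod 6) or n ≡ 3 (mod 6). -/
/-- A Steiner triple system on `Fin n`: a collection of 3-element subsets such that
every 2-element subset is contained in exactly one member. -/
def IsSteinerTripleSystem (n : ℕ) (S : Finset (Finset (Fin n))) : Prop :=
  (∀ t ∈ S, t.card = 3) ∧
  ∀ p : Finset (Fin n), p.card = 2 → ∃! t, t ∈ S ∧ p ⊆ t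

theorem kirkman_necessity (n : ℕ) (hn : 1 ≤ n)
    (S : Finset (Finset (Fin n))) (hS : IsSteinerTripleSystem n S) :
    n % 6 = 1 ∨ n % 6 = 3 := by
  obtain ⟨h3, hu⟩ := hS
  -- Pair counting: 3 * S.card = n.choose 2
  have hcover : S.biUnion (fun t => t.powersetCard 2) =
      (Finset.univ : Finset (Fin n)).powersetCard 2 := by
    ext p
    simp only [Finset.mem_biUnion, Finset.mem_powersetCard, Finset.subset_univ, true_and]
    constructor
    · rintro ⟨t, _, _, hc⟩; exact hc
    · intro hc
      obtain ⟨t, ⟨htS, hpt⟩, _⟩ := hu p hc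
      exact ⟨t, htS, hpt, hc⟩
  have hdisj : ∀ a ∈ S, ∀ b ∈ S, a ≠ b →
      Disjoint (a.powersetCard 2) (b.powersetCard 2) := by
    intro a ha b hb hab
    rw [Finset.disjoint_left]
    intro p hpa hpb
    rw [Finset.mem_powersetCard] at hpa hpb
    obtain ⟨t, _, ht⟩ := hu p hpa.2
    exact hab ((ht a ⟨ha, hpa.1⟩).trans (ht b ⟨hb, hpb.1⟩).symm)
  have hpair : 3 * S.card = n.choose 2 := by
    have h1 := Finset.card_biUnion hdisj
    rw [hcover] at h1
    rw [Finset.card_powersetCard, Finset.card_univ, Fintype.card_fin] at h1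
    rw [h1, Finset.sum_congr rfl (fun t ht => by
      simp [Finset.card_powersetCard, h3 t ht] : ∀ t ∈ S, (Finset.powersetCard 2 t).card = 3)]
    simp [Finset.sum_const, mul_comm]
  -- Point counting: n - 1 = 2 * degree, using x = ⟨0, _⟩
  set x : Fin n := ⟨0, hn⟩ with hxdef
  set T : Finset (Finset (Fin n)) := S.filter (fun t => x ∈ t) with hT
  have hcover2 : T.biUnion (fun t => t.erase x) = Finset.univ.erase x := by
    ext y
    simp only [Finset.mem_biUnion, Finset.mem_erase, Finset.mem_univ, and_true, hT,
      Finset.mem_filter]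
    constructor
    · rintro ⟨t, _, hy, _⟩; exact hy
    · intro hy
      have hp : ({x, y} : Finset (Fin n)).card = 2 := by
        rw [Finset.card_insert_of_notMem (by simp [Ne.symm hy]), Finset.card_singleton]
      obtain ⟨t, ⟨htS, hpt⟩, _⟩ := hu _ hp
      refine ⟨t, ⟨htS, hpt (by simp)⟩, hy, hpt (by simp)⟩
  have hdisj2 : ∀ a ∈ T, ∀ b ∈ T, a ≠ b → Disjoint (a.erase x) (b.erase x) := by
    intro a ha b hb hab
    rw [Finset.disjoint_left]
    intro y hya hyb
    rw [Finset.mem_erase] at hya hyb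
    rw [hT, Finset.mem_filter] at ha hb
    have hp : ({x, y} : Finset (Fin n)).card = 2 := by
      rw [Finset.card_insert_of_notMem (by simp [Ne.symm hya.1]), Finset.card_singleton]
    obtain ⟨t, _, ht⟩ := hu _ hp
    have hsa : ({x, y} : Finset (Fin n)) ⊆ a := by
      intro z hz; rcases Finset.mem_insert.1 hz with h | h
      · exact h ▸ ha.2
      · exact (Finset.mem_singleton.1 h) ▸ hya.2
    have hsb : ({x, y} : Finset (Fin n)) ⊆ b := by
      intro z hz; rcases Finset.mem_insert.1 hz with h | h
      · exact h ▸ hb.2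
      · exact (Finset.mem_singleton.1 h) ▸ hyb.2
    exact hab ((ht a ⟨ha.1, hsa⟩).trans (ht b ⟨hb.1, hsb⟩).symm)
  have hdeg : 2 * T.card = n - 1 := by
    have h1 := Finset.card_biUnion hdisj2
    rw [hcover2] at h1
    rw [Finset.card_erase_of_mem (Finset.mem_univ x), Finset.card_univ, Fintype.card_fin] at h1
    rw [h1, Finset.sum_congr rfl (fun t ht => by
      rw [Finset.mem_filter] at ht
      rw [Finset.card_erase_of_mem ht.2, h3 t ht.1] : ∀ t ∈ T, (t.erase x).card = 2)]
    simp [Finset.sum_const, mul_comm]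
  -- Arithmetic
  set c := T.card
  set s := S.card
  have hn1 : n = 2 * c + 1 := by omega
  have hch : n.choose 2 = n * (n - 1) / 2 := Nat.choose_two_right n
  have hm1 : n - 1 = 2 * c := by omega
  have hkey : n * (n - 1) = 2 * ((2 * c + 1) * c) := by rw [hm1, hn1]; ring
  have h3s : 3 * s = (2 * c + 1) * c := by
    rw [hpair, hch, hkey, Nat.mul_div_cancel_left _ (by norm_num : (0:ℕ) < 2)] at *
  have hdvd : (3 : ℕ) ∣ (2 * c + 1) * c := ⟨s, by omega⟩
  rcases (Nat.Prime.dvd_mul (by norm_num)).1 hdvd with h | h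
  · obtain ⟨m, hm⟩ := h; omega
  · obtain ⟨m, hm⟩ := h; omega
end

section
/- For every i with 1 ≤ i ≤ n-3, every Steiner triple system on n vertices contains i triples spanning at most i+3 vertices (i.e., an (i+3, i)-configuration). -/
private lemma choose_bound {u i : ℕ} (h : u.choose 2 ≤ 3 * i) : u ≤ i + 2 := by
  by_contra hlt
  push_neg at hlt
  have h1 : (i + 3).choose 2 ≤ u.choose 2 := Nat.choose_le_choose 2 (by omega)
  rw [Nat.choose_two_right] at h1
  have h2 : (i + 3) * (i + 3 - 1) = i * i + 5 * i + 6 := by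
    have : i + 3 - 1 = i + 2 := rfl
    rw [this]; ring
  rw [h2] at h1
  rcases Nat.eq_zero_or_pos i with h0 | hip
  · subst h0; omega
  · have h4 : i ≤ i * i := Nat.le_mul_of_pos_left i hip
    omega

/-- Every Steiner triple system on `n` vertices contains, for each `1 ≤ i ≤ n - 3`,
an `(i+3, i)`-configuration: `i` triples spanning at most `i + 3` vertices. -/
theorem steiner_triple_system_configurations (n : ℕ)
    (S : Finset (Finset (Fin n))) (hS : IsSteinerTripleSystem n S) :
    ∀ i : ℕ, 1 ≤ i → i ≤ n - 3 →
      ∃ C ⊆ S, C.card = i ∧ (C.biUnion id).card ≤ i + 3 := by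
  obtain ⟨hcard, hpair⟩ := hS
  intro i
  induction i with
  | zero => omega
  | succ i ih =>
    intro _ hin
    have hn4 : 4 ≤ n := by omega
    rcases Nat.eq_zero_or_pos i with h0 | hpos
    · -- base case: i + 1 = 1
      subst h0
      set a : Fin n := ⟨0, by omega⟩
      set b : Fin n := ⟨1, by omega⟩
      have hab : a ≠ b := by simp [a, b, Fin.ext_iff]
      have hp2 : ({a, b} : Finset (Fin n)).card = 2 := Finset.card_pair hab
      obtain ⟨t, ⟨htS, hpt⟩, -⟩ := hpair {a, b} hp2
      refine ⟨{t}, by simpa using htS, by simp, ?_⟩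
      simp only [Finset.singleton_biUnion, id]
      rw [hcard t htS]; omega
    · -- inductive step
      obtain ⟨C, hCS, hCc, hCu⟩ := ih hpos (by omega)
      set U := C.biUnion id with hU
      by_cases hcov : ∃ p ∈ U.powersetCard 2, ∀ t ∈ C, ¬ p ⊆ t
      · -- Case A: an uncovered pair inside U
        obtain ⟨p, hpU, hnot⟩ := hcov
        rw [Finset.mem_powersetCard] at hpU
        obtain ⟨hpsub, hp2⟩ := hpU
        obtain ⟨t, ⟨htS, hpt⟩, -⟩ := hpair p hp2
        have htC : t ∉ C := fun h => hnot t h hpt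
        refine ⟨insert t C, ?_, ?_, ?_⟩
        · exact Finset.insert_subset htS hCS
        · rw [Finset.card_insert_of_notMem htC, hCc]
        · rw [Finset.biUnion_insert, ← hU]
          have h1 : ((id t : Finset (Fin n)) \ U).card + U.card = (id t ∪ U).card :=
            Finset.card_sdiff_add_card ..
          have h2 : (id t : Finset (Fin n)) \ U ⊆ t \ p :=
            Finset.sdiff_subset_sdiff (by simp) hpsub
          have h3 : (t \ p).card = 1 := by
            rw [Finset.card_sdiff_of_subset hpt, hcard t htS, hp2]
          have h4 := Finset.card_le_card h2
          omega
      · -- Case B: every pair inside U is covered; then U is small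
        push_neg at hcov
        have hsub : U.powersetCard 2 ⊆ C.biUnion (fun t => t.powersetCard 2) := by
          intro p hp
          obtain ⟨t, htC, hpt⟩ := hcov p hp
          rw [Finset.mem_powersetCard] at hp
          exact Finset.mem_biUnion.mpr ⟨t, htC, Finset.mem_powersetCard.mpr ⟨hpt, hp.2⟩⟩
        have hcount : U.card.choose 2 ≤ 3 * i := by
          have h1 := Finset.card_le_card hsub
          rw [Finset.card_powersetCard] at h1
          have h2 := Finset.card_biUnion_le (s := C) (t := fun t => t.powersetCard 2)
          have h3 : ∑ t ∈ C, (t.powersetCard 2).card = 3 * i := by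
            rw [Finset.sum_congr rfl (fun t ht => by
              rw [Finset.card_powersetCard, hcard t (hCS ht)])]
            simp [hCc, Finset.sum_const, mul_comm]
          omega
        have hUsmall : U.card ≤ i + 2 := choose_bound hcount
        -- pick x ∈ U
        have hCne : C.Nonempty := Finset.card_pos.mp (by omega)
        obtain ⟨t0, ht0⟩ := hCne
        have ht0ne : t0.Nonempty := Finset.card_pos.mp (by rw [hcard t0 (hCS ht0)]; omega)
        obtain ⟨x, hx⟩ := ht0ne
        have hxU : x ∈ U := Finset.mem_biUnion.mpr ⟨t0, ht0, hx⟩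
        -- pick y ∉ U
        have hUlt : U.card < n := by omega
        have hcompl : (Finset.univ \ U).Nonempty := by
          rw [← Finset.card_pos, Finset.card_sdiff_of_subset (Finset.subset_univ U),
            Finset.card_univ, Fintype.card_fin]
          omega
        obtain ⟨y, hy⟩ := hcompl
        have hyU : y ∉ U := (Finset.mem_sdiff.mp hy).2
        have hxy : x ≠ y := fun h => hyU (h ▸ hxU)
        have hp2 : ({x, y} : Finset (Fin n)).card = 2 := Finset.card_pair hxy
        obtain ⟨t, ⟨htS, hpt⟩, -⟩ := hpair {x, y} hp2
        have hyt : y ∈ t := hpt (by simp)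
        have hxt : x ∈ t := hpt (by simp)
        have htC : t ∉ C := fun h => hyU (Finset.mem_biUnion.mpr ⟨t, h, hyt⟩)
        refine ⟨insert t C, Finset.insert_subset htS hCS, ?_, ?_⟩
        · rw [Finset.card_insert_of_notMem htC, hCc]
        · rw [Finset.biUnion_insert, ← hU]
          have h1 : ((id t : Finset (Fin n)) \ U).card + U.card = (id t ∪ U).card :=
            Finset.card_sdiff_add_card ..
          have h2 : (id t : Finset (Fin n)) \ U ⊆ t \ {x} :=
            Finset.sdiff_subset_sdiff (by simp) (Finset.singleton_subset_iff.mpr hxU)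
          have h3 : (t \ {x}).card = 2 := by
            rw [Finset.card_sdiff_of_subset (Finset.singleton_subset_iff.mpr hxt), hcard t htS, Finset.card_singleton]
          have h4 := Finset.card_le_card h2
          omega
end
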